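/- Let $a : \mathbb{R}^d \to \mathbb{M}^d$ be a matrix-valued function, $n_0 \in \mathbb{R}^d$ a unit vector, and suppose $\langle a(x) n_0, n_0 \rangle \geq c > 0$ and $\|a(x)\| \leq M$ for all $x$ in a set $N$. Let $\theta \in [0, \pi/2]$ and let $Z \in \mathbb{R}^d$ with $\|Z\| = 1$ satisfy $\langle Z, n_0 \rangle \geq \cos\theta$. If $a(x)$ is symmetric positive semidefinite for each $x \in N$, then for all $x \in N$: $\langle a(x) Z, Z \rangle \geq \cos^2(\theta) \cdot c - 2(d-1)\sin(\theta) M$. In particular, if $\theta$ is small enough that $2(d-1)\sin(\theta) M \leq \frac{3}{4}\cos^2(\theta) c$, then $\langle a(x) Z, Z \rangle \geq \frac{c \cos^2\theta}{4}$ for all $x \in N$. -/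

import Mathlib

/-!
Write `Z = β • n₀ + W` with `β = ⟪Z, n₀⟫`, so that `W ⊥ n₀` and `‖W‖² = 1 - β² ≤ sin² θ`.
Expanding `⟪a Z, Z⟫`, the main term is `β² ⟪a n₀, n₀⟫ ≥ cos² θ · c`, the two cross terms cost at
most `M ‖W‖` each and `⟪a W, W⟫ ≥ 0`. In dimension one `W = 0`, whence the factor `d - 1`.
-/

open scoped RealInnerProductSpace
open Module Real

section InnerProductSpace

variable {E : Type*} [NormedAddCommGroup E] [InnerProductSpace ℝ E]

lemma sq_mul_inner_map_sub_le_inner_map_smul_add {T : E →L[ℝ] E} {M β : ℝ}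
    (hpsd : ∀ v, 0 ≤ ⟪T v, v⟫) (hbound : ∀ v w, |⟪T v, w⟫| ≤ M * ‖v‖ * ‖w‖)
    {u : E} (hu : ‖u‖ = 1) (hβ : |β| ≤ 1) (w : E) :
    β ^ 2 * ⟪T u, u⟫ - 2 * M * ‖w‖ ≤ ⟪T (β • u + w), β • u + w⟫ := by
  have hexpand : ⟪T (β • u + w), β • u + w⟫ =
      β ^ 2 * ⟪T u, u⟫ + β * ⟪T u, w⟫ + β * ⟪T w, u⟫ + ⟪T w, w⟫ := by
    simp only [map_add, map_smul, inner_add_left, inner_add_right, real_inner_smul_left,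
      real_inner_smul_right]
    ring
  have hcross (r : ℝ) (hr : |r| ≤ M * ‖w‖) : -(M * ‖w‖) ≤ β * r := by
    have : |β * r| ≤ M * ‖w‖ := by
      rw [abs_mul]
      nlinarith [abs_nonneg r]
    linarith [neg_abs_le (β * r)]
  have huw := hcross _ (by simpa [hu] using hbound u w)
  have hwu := hcross _ (by simpa [hu] using hbound w u)
  linarith [hpsd w]

lemma norm_sub_inner_smul_sq {u : E} (hu : ‖u‖ = 1) (z : E) :
    ‖z - ⟪z, u⟫ • u‖ ^ 2 = ‖z‖ ^ 2 - ⟪z, u⟫ ^ 2 := by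
  rw [norm_sub_sq_real, real_inner_smul_right, norm_smul, hu, Real.norm_eq_abs, mul_one, sq_abs]
  ring

lemma norm_sub_inner_smul_le_sin {u z : E} {θ : ℝ} (hu : ‖u‖ = 1) (hz : ‖z‖ = 1)
    (hcos : 0 ≤ cos θ) (hsin : 0 ≤ sin θ) (h : cos θ ≤ ⟪z, u⟫) :
    ‖z - ⟪z, u⟫ • u‖ ≤ sin θ := by
  refine (pow_le_pow_iff_left₀ (norm_nonneg _) hsin two_ne_zero).mp ?_
  rw [norm_sub_inner_smul_sq hu, hz, one_pow, ← cos_sq_add_sin_sq θ]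
  nlinarith [mul_le_mul h h hcos (hcos.trans h)]

lemma sub_inner_smul_eq_zero_of_finrank_eq_one (hE : finrank ℝ E = 1) {u : E} (hu : ‖u‖ = 1)
    (z : E) : z - ⟪z, u⟫ • u = 0 := by
  obtain ⟨c, rfl⟩ := (finrank_eq_one_iff_of_nonzero' u (by rintro rfl; simp at hu)).mp hE z
  rw [real_inner_smul_left, real_inner_self_eq_norm_sq, hu]
  simp

lemma norm_sub_inner_smul_le_finrank_sub_one_mul_sin [FiniteDimensional ℝ E] {u z : E} {θ : ℝ}
    (hu : ‖u‖ = 1) (hz : ‖z‖ = 1) (hcos : 0 ≤ cos θ) (hsin : 0 ≤ sin θ) (h : cos θ ≤ ⟪z, u⟫) :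
    ‖z - ⟪z, u⟫ • u‖ ≤ (finrank ℝ E - 1) * sin θ := by
  have hpos : 0 < finrank ℝ E :=
    finrank_pos_iff_exists_ne_zero.mpr ⟨u, by rintro rfl; simp at hu⟩
  obtain hE | hE : finrank ℝ E = 1 ∨ 2 ≤ finrank ℝ E := by omega
  · simp [sub_inner_smul_eq_zero_of_finrank_eq_one hE hu, hE]
  · have hE' : (1 : ℝ) ≤ finrank ℝ E - 1 := by
      have : (2 : ℝ) ≤ finrank ℝ E := by exact_mod_cast hE
      linarith
    calc ‖z - ⟪z, u⟫ • u‖ ≤ sin θ := norm_sub_inner_smul_le_sin hu hz hcos hsin h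
      _ ≤ (finrank ℝ E - 1) * sin θ := le_mul_of_one_le_left hsin hE'

end InnerProductSpace

theorem stmt1_general (d : ℕ) (c M θ : ℝ) (hc : 0 < c) (hM : 0 ≤ M)
    (hθ : θ ∈ Set.Icc 0 (Real.pi / 2))
    (N : Set (EuclideanSpace ℝ (Fin d)))
    (a : EuclideanSpace ℝ (Fin d) →
      (EuclideanSpace ℝ (Fin d) →L[ℝ] EuclideanSpace ℝ (Fin d)))
    (n0 : EuclideanSpace ℝ (Fin d)) (hn0 : ‖n0‖ = 1)
    (hlow : ∀ x ∈ N, c ≤ ⟪a x n0, n0⟫)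
    (hbound : ∀ x ∈ N, ∀ v w : EuclideanSpace ℝ (Fin d), |⟪a x v, w⟫| ≤ M * ‖v‖ * ‖w‖)
    (hpsd : ∀ x ∈ N, ∀ v : EuclideanSpace ℝ (Fin d), 0 ≤ ⟪a x v, v⟫)
    (Z : EuclideanSpace ℝ (Fin d)) (hZ : ‖Z‖ = 1) (hZn : Real.cos θ ≤ ⟪Z, n0⟫) :
    (∀ x ∈ N, Real.cos θ ^ 2 * c - 2 * ((d : ℝ) - 1) * Real.sin θ * M ≤ ⟪a x Z, Z⟫) ∧
    (2 * ((d : ℝ) - 1) * Real.sin θ * M ≤ 3 / 4 * (Real.cos θ ^ 2 * c) →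
      ∀ x ∈ N, c * Real.cos θ ^ 2 / 4 ≤ ⟪a x Z, Z⟫) := by
  obtain ⟨hθ0, hθ2⟩ := hθ
  have hcos : 0 ≤ cos θ := cos_nonneg_of_mem_Icc ⟨by linarith [pi_pos], hθ2⟩
  have hsin : 0 ≤ sin θ := sin_nonneg_of_nonneg_of_le_pi hθ0 (by linarith [pi_pos])
  set β := ⟪Z, n0⟫
  have hβ : |β| ≤ 1 := by simpa [hZ, hn0] using abs_real_inner_le_norm Z n0
  have hW : ‖Z - β • n0‖ ≤ (d - 1) * sin θ := by
    simpa using norm_sub_inner_smul_le_finrank_sub_one_mul_sin hn0 hZ hcos hsin hZn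
  have hmain (x : _) (hx : x ∈ N) :
      cos θ ^ 2 * c - 2 * ((d : ℝ) - 1) * sin θ * M ≤ ⟪a x Z, Z⟫ := by
    have hquad : cos θ ^ 2 * c ≤ β ^ 2 * ⟪a x n0, n0⟫ := by
      gcongr
      exact hlow x hx
    have hpert := sq_mul_inner_map_sub_le_inner_map_smul_add (hpsd x hx) (hbound x hx) hn0 hβ
      (Z - β • n0)
    rw [add_sub_cancel] at hpert
    nlinarith [mul_le_mul_of_nonneg_left hW hM]
  refine ⟨hmain, fun hsmall x hx => ?_⟩
  linarith [hmain x hx]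

/-- If `⟨a(x) n₀, n₀⟩ ≥ c`, `a(x)` has (operator) norm at most `M`, is symmetric positive
semidefinite on `N`, and `Z` is a unit vector with `⟨Z, n₀⟩ ≥ cos θ`, then
`⟨a(x) Z, Z⟩ ≥ cos²θ · c - 2(d-1) sin θ · M` on `N`; in particular if
`2(d-1) sin θ M ≤ (3/4) cos²θ c` then `⟨a(x) Z, Z⟩ ≥ c cos²θ / 4`. -/
theorem stmt1 (d : ℕ) (c M θ : ℝ) (hc : 0 < c) (hM : 0 ≤ M)
    (hθ : θ ∈ Set.Icc 0 (Real.pi / 2))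
    (N : Set (EuclideanSpace ℝ (Fin d)))
    (a : EuclideanSpace ℝ (Fin d) →
      (EuclideanSpace ℝ (Fin d) →L[ℝ] EuclideanSpace ℝ (Fin d)))
    (n0 : EuclideanSpace ℝ (Fin d)) (hn0 : ‖n0‖ = 1)
    (hlow : ∀ x ∈ N, c ≤ ⟪a x n0, n0⟫)
    (hbound : ∀ x ∈ N, ∀ v w : EuclideanSpace ℝ (Fin d), |⟪a x v, w⟫| ≤ M * ‖v‖ * ‖w‖)
    (hsymm : ∀ x ∈ N, ∀ v w : EuclideanSpace ℝ (Fin d), ⟪a x v, w⟫ = ⟪v, a x w⟫)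
    (hpsd : ∀ x ∈ N, ∀ v : EuclideanSpace ℝ (Fin d), 0 ≤ ⟪a x v, v⟫)
    (Z : EuclideanSpace ℝ (Fin d)) (hZ : ‖Z‖ = 1) (hZn : Real.cos θ ≤ ⟪Z, n0⟫) :
    (∀ x ∈ N, Real.cos θ ^ 2 * c - 2 * ((d : ℝ) - 1) * Real.sin θ * M ≤ ⟪a x Z, Z⟫) ∧
    (2 * ((d : ℝ) - 1) * Real.sin θ * M ≤ 3 / 4 * (Real.cos θ ^ 2 * c) →
      ∀ x ∈ N, c * Real.cos θ ^ 2 / 4 ≤ ⟪a x Z, Z⟫) :=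
  stmt1_general d c M θ hc hM hθ N a n0 hn0 hlow hbound hpsd Z hZ hZn
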